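/- For any α, β ∈ R, the pointwise bound V^{αβ}(u,v,t) ≤ |u|^{n γ - n} |v|^{n γ - n} |t|^{γ - 1} holds for all nonzero u, v ∈ R^n and nonzero t ∈ R, where γ = (α+β)/(n+1) and V^{αβ}(u,v,t) = |u|^{α-n}|v|^{α-n}|t|^{β-1}(|u||v|/|t| + |t|/(|u||v|))^{-|α-nβ|/(n+1)}. -/
import Mathlib

private lemma key_ineq (x : ℝ) (hx : 0 < x) (δ : ℝ) :
    x ^ δ * (x + x⁻¹) ^ (-|δ|) ≤ 1 := by
  have hK : 0 < x + x⁻¹ := by positivity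
  have h : ∀ y e : ℝ, 0 < y → 0 ≤ e → y ≤ x + x⁻¹ → y ^ e * (x + x⁻¹) ^ (-e) ≤ 1 := by
    intro y e hy he hyK
    rw [Real.rpow_neg hK.le, ← div_eq_mul_inv, div_le_one (by positivity)]
    exact Real.rpow_le_rpow hy.le hyK he
  rcases le_or_gt 0 δ with hδ | hδ
  · rw [abs_of_nonneg hδ]
    exact h x δ hx hδ (le_add_of_nonneg_right (by positivity))
  · rw [abs_of_neg hδ]
    have hxe : x ^ δ = x⁻¹ ^ (-δ) := by
      rw [Real.inv_rpow hx.le, ← Real.rpow_neg hx.le, neg_neg]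
    rw [hxe]
    exact h x⁻¹ (-δ) (by positivity) (by linarith) (le_add_of_nonneg_left hx.le)

theorem Vab_upper_bound (n : ℕ) (hn : 1 ≤ n) (α β : ℝ)
    (u v : EuclideanSpace ℝ (Fin n)) (t : ℝ) (hu : u ≠ 0) (hv : v ≠ 0) (ht : t ≠ 0) :
    ‖u‖ ^ (α - n) * ‖v‖ ^ (α - n) * |t| ^ (β - 1) *
        (‖u‖ * ‖v‖ / |t| + |t| / (‖u‖ * ‖v‖)) ^ (-(|α - n * β| / (n + 1))) ≤
      ‖u‖ ^ (n * ((α + β) / (n + 1)) - n) * ‖v‖ ^ (n * ((α + β) / (n + 1)) - n) *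
        |t| ^ ((α + β) / (n + 1) - 1) := by
  have hA : (0:ℝ) < ‖u‖ := norm_pos_iff.mpr hu
  have hB : (0:ℝ) < ‖v‖ := norm_pos_iff.mpr hv
  have hs : (0:ℝ) < |t| := abs_pos.mpr ht
  have hn1 : (0:ℝ) < (n:ℝ) + 1 := by positivity
  set γ : ℝ := (α + β) / (n + 1) with hγ
  set δ : ℝ := (α - n * β) / (n + 1) with hδ
  have e1 : α - n = ((n:ℝ) * γ - n) + δ := by
    rw [hγ, hδ]; field_simp; ring
  have e2 : β - 1 = (γ - 1) + (-δ) := by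
    rw [hγ, hδ]; field_simp; ring
  have hρ : |α - (n:ℝ) * β| / ((n:ℝ) + 1) = |δ| := by
    rw [hδ, abs_div, abs_of_pos hn1]
  set x : ℝ := ‖u‖ * ‖v‖ / |t| with hxdef
  have hx : 0 < x := by positivity
  have hxinv : |t| / (‖u‖ * ‖v‖) = x⁻¹ := by
    rw [hxdef, inv_div]
  have hxδ : x ^ δ = ‖u‖ ^ δ * ‖v‖ ^ δ * |t| ^ (-δ) := by
    rw [hxdef, Real.div_rpow (by positivity) hs.le, Real.mul_rpow hA.le hB.le,
      Real.rpow_neg hs.le, div_eq_mul_inv]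
  have hEq : ‖u‖ ^ (α - n) * ‖v‖ ^ (α - n) * |t| ^ (β - 1) *
      (‖u‖ * ‖v‖ / |t| + |t| / (‖u‖ * ‖v‖)) ^ (-(|α - n * β| / (n + 1))) =
      (‖u‖ ^ ((n:ℝ) * γ - n) * ‖v‖ ^ ((n:ℝ) * γ - n) * |t| ^ (γ - 1)) *
        (x ^ δ * (x + x⁻¹) ^ (-|δ|)) := by
    rw [hρ, hxinv, e1, e2, Real.rpow_add hA, Real.rpow_add hB, Real.rpow_add hs, hxδ]
    ring
  calc ‖u‖ ^ (α - n) * ‖v‖ ^ (α - n) * |t| ^ (β - 1) *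
      (‖u‖ * ‖v‖ / |t| + |t| / (‖u‖ * ‖v‖)) ^ (-(|α - n * β| / (n + 1)))
      = (‖u‖ ^ ((n:ℝ) * γ - n) * ‖v‖ ^ ((n:ℝ) * γ - n) * |t| ^ (γ - 1)) *
        (x ^ δ * (x + x⁻¹) ^ (-|δ|)) := hEq
    _ ≤ (‖u‖ ^ ((n:ℝ) * γ - n) * ‖v‖ ^ ((n:ℝ) * γ - n) * |t| ^ (γ - 1)) * 1 := by
        exact mul_le_mul_of_nonneg_left (key_ineq x hx δ) (by positivity)
    _ = ‖u‖ ^ ((n:ℝ) * γ - n) * ‖v‖ ^ ((n:ℝ) * γ - n) * |t| ^ (γ - 1) := mul_one _
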